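/- The two-fermion bipartite entanglement entropy E(r₁,r₂,l₁,l₂) = −|r₁r₂|²log₂(|r₁r₂|²/(|r₁r₂|²+|l₁l₂|²)) − |l₁l₂|²log₂(|l₁l₂|²/(|r₁r₂|²+|l₁l₂|²)) − |r₁l₂|²log₂(|r₁l₂|²/(|r₁l₂|²+|l₁r₂|²)) − |l₁r₂|²log₂(|l₁r₂|²/(|r₁l₂|²+|l₁r₂|²)), subject to |r₁|²+|l₁|²=1 and |r₂|²+|l₂|²=1, attains its maximum value 1, achieved when |r₁|=|r₂|=|l₁|=|l₂|=1/√2. -/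
import Mathlib


open Real

lemma pair_le (x y : ℝ) (hx : 0 ≤ x) (hy : 0 ≤ y) :
    - x * Real.logb 2 (x / (x + y)) - y * Real.logb 2 (y / (x + y)) ≤ x + y := by
  rcases hx.eq_or_lt with rfl | hx
  · rcases hy.eq_or_lt with rfl | hy
    · simp
    · rw [zero_add, div_self hy.ne']
      simp [hy.le]
  rcases hy.eq_or_lt with rfl | hy
  · rw [add_zero, div_self hx.ne']
    simp [hx.le]
  have hs : 0 < x + y := by linarith
  have hl2 : 0 < Real.log 2 := Real.log_pos one_lt_two
  have e1 : Real.log ((x+y)/(2*x)) = Real.log (x+y) - Real.log 2 - Real.log x := by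
    rw [Real.log_div hs.ne' (by positivity), Real.log_mul two_ne_zero hx.ne']; ring
  have e2 : Real.log ((x+y)/(2*y)) = Real.log (x+y) - Real.log 2 - Real.log y := by
    rw [Real.log_div hs.ne' (by positivity), Real.log_mul two_ne_zero hy.ne']; ring
  have h1 : Real.log (x+y) - Real.log 2 - Real.log x ≤ (x+y)/(2*x) - 1 := by
    rw [← e1]; exact Real.log_le_sub_one_of_pos (by positivity)
  have h2 : Real.log (x+y) - Real.log 2 - Real.log y ≤ (x+y)/(2*y) - 1 := by
    rw [← e2]; exact Real.log_le_sub_one_of_pos (by positivity)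
  have m1 : x * (Real.log (x+y) - Real.log 2 - Real.log x) ≤ (x+y)/2 - x := by
    have := mul_le_mul_of_nonneg_left h1 hx.le
    have hx' : x * ((x+y)/(2*x) - 1) = (x+y)/2 - x := by field_simp
    linarith [this.trans_eq hx']
  have m2 : y * (Real.log (x+y) - Real.log 2 - Real.log y) ≤ (x+y)/2 - y := by
    have := mul_le_mul_of_nonneg_left h2 hy.le
    have hy' : y * ((x+y)/(2*y) - 1) = (x+y)/2 - y := by field_simp
    linarith [this.trans_eq hy']
  have key : x*(Real.log (x+y) - Real.log x) + y*(Real.log (x+y) - Real.log y)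
      ≤ (x+y) * Real.log 2 := by nlinarith [m1, m2]
  rw [Real.logb, Real.logb, Real.log_div hx.ne' hs.ne', Real.log_div hy.ne' hs.ne']
  have heq : - x * ((Real.log x - Real.log (x+y)) / Real.log 2)
      - y * ((Real.log y - Real.log (x+y)) / Real.log 2)
      = (x*(Real.log (x+y) - Real.log x) + y*(Real.log (x+y) - Real.log y)) / Real.log 2 := by
    ring
  rw [heq, div_le_iff₀ hl2]
  linarith

/-- The PSSR-preserving entanglement entropy of two spin-1/2 fermions with
spatial amplitudes `r₁, r₂` (site X) and `l₁, l₂` (site Y). Terms with zero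
coefficient are automatically `0` (since `0 * logb 2 _ = 0`). -/
noncomputable def fermionEntropy (r₁ r₂ l₁ l₂ : ℂ) : ℝ :=
  - ‖r₁ * r₂‖ ^ 2 * Real.logb 2 (‖r₁ * r₂‖ ^ 2 / (‖r₁ * r₂‖ ^ 2 + ‖l₁ * l₂‖ ^ 2))
  - ‖l₁ * l₂‖ ^ 2 * Real.logb 2 (‖l₁ * l₂‖ ^ 2 / (‖r₁ * r₂‖ ^ 2 + ‖l₁ * l₂‖ ^ 2))
  - ‖r₁ * l₂‖ ^ 2 * Real.logb 2 (‖r₁ * l₂‖ ^ 2 / (‖r₁ * l₂‖ ^ 2 + ‖l₁ * r₂‖ ^ 2))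
  - ‖l₁ * r₂‖ ^ 2 * Real.logb 2 (‖l₁ * r₂‖ ^ 2 / (‖r₁ * l₂‖ ^ 2 + ‖l₁ * r₂‖ ^ 2))

/-- The two-fermion bipartite PSSR entanglement entropy, subject to the
normalizations `|rᵢ|² + |lᵢ|² = 1`, attains its maximal value `1`, achieved
when all four amplitudes have modulus `1/√2`. -/
theorem fermionEntropy_max :
    (∀ r₁ r₂ l₁ l₂ : ℂ, ‖r₁‖ ^ 2 + ‖l₁‖ ^ 2 = 1 → ‖r₂‖ ^ 2 + ‖l₂‖ ^ 2 = 1 →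
      fermionEntropy r₁ r₂ l₁ l₂ ≤ 1) ∧
    (∀ r₁ r₂ l₁ l₂ : ℂ, ‖r₁‖ = 1 / Real.sqrt 2 → ‖r₂‖ = 1 / Real.sqrt 2 →
      ‖l₁‖ = 1 / Real.sqrt 2 → ‖l₂‖ = 1 / Real.sqrt 2 →
      fermionEntropy r₁ r₂ l₁ l₂ = 1) := by
  constructor
  · intro r₁ r₂ l₁ l₂ h1 h2
    have k1 := pair_le (‖r₁ * r₂‖ ^ 2) (‖l₁ * l₂‖ ^ 2) (by positivity) (by positivity)
    have k2 := pair_le (‖r₁ * l₂‖ ^ 2) (‖l₁ * r₂‖ ^ 2) (by positivity) (by positivity)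
    have hsum : ‖r₁ * r₂‖ ^ 2 + ‖l₁ * l₂‖ ^ 2 + (‖r₁ * l₂‖ ^ 2 + ‖l₁ * r₂‖ ^ 2) = 1 := by
      simp only [norm_mul, mul_pow]
      nlinarith [h1, h2]
    unfold fermionEntropy
    linarith
  · intro r₁ r₂ l₁ l₂ h1 h2 h3 h4
    have hq : (1 / Real.sqrt 2 * (1 / Real.sqrt 2)) ^ 2 = 1/4 := by
      rw [div_mul_div_comm, one_mul, Real.mul_self_sqrt (by norm_num)]
      norm_num
    have hlb : Real.logb 2 ((1:ℝ)/4 / (1/4 + 1/4)) = -1 := by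
      norm_num
      rw [one_div, Real.logb_inv]; simp
    unfold fermionEntropy
    rw [norm_mul, norm_mul, norm_mul, norm_mul, h1, h2, h3, h4, hq, hlb]
    norm_num
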